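/- (Zonotope collision check.) Let Z₁ = Z(c₁, G₁) ⊂ ℝⁿ and Z₂ = Z(c₂, G₂) ⊂ ℝⁿ be zonotopes. Then Z₁ ∩ Z₂ = ∅ if and only if c₁ ∉ Z(c₂, [G₁, G₂]), where [G₁, G₂] denotes the horizontal concatenation of the generator matrices. -/

import Mathlib

/-- The zonotope with center `c` and generator matrix `G`:
the set `{c + Gβ : ‖β‖_∞ ≤ 1}`. -/
def zonotope {ρ ι : Type*} [Fintype ι] (c : ρ → ℝ) (G : Matrix ρ ι ℝ) :
    Set (ρ → ℝ) :=
  {x | ∃ β : ι → ℝ, (∀ i, |β i| ≤ 1) ∧ x = c + G.mulVec β}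

/-
Translating by `-c₁` and using the symmetry `Z(0, G₁) = -Z(0, G₁)`, a common point `x` of
the two zonotopes is the same as a decomposition `c₁ = (c₁ - x) + x` with `c₁ - x ∈ Z(0, G₁)`
and `x ∈ Z(c₂, G₂)`. Concatenating generators is the Minkowski sum,
`Z(c₂, [G₁, G₂]) = Z(0, G₁) + Z(c₂, G₂)`, so such a decomposition exists exactly when
`c₁ ∈ Z(c₂, [G₁, G₂])`.
-/
open Pointwise

section Zonotope

variable {ρ ι : Type*} [Fintype ι]

theorem mem_zonotope_iff_sub_mem_zonotope_zero {c x : ρ → ℝ} {G : Matrix ρ ι ℝ} :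
    x ∈ zonotope c G ↔ x - c ∈ zonotope 0 G := by
  simp only [zonotope, Set.mem_ofPred_eq, zero_add, sub_eq_iff_eq_add']

theorem neg_mem_zonotope_zero {x : ρ → ℝ} {G : Matrix ρ ι ℝ} :
    -x ∈ zonotope 0 G ↔ x ∈ zonotope 0 G := by
  suffices ∀ y, y ∈ zonotope 0 G → -y ∈ zonotope 0 G from
    ⟨fun h ↦ neg_neg x ▸ this _ h, this x⟩
  rintro y ⟨β, hβ, rfl⟩
  exact ⟨-β, fun i ↦ by simpa using hβ i, by simp [Matrix.mulVec_neg]⟩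

theorem zonotope_fromCols {ι₂ : Type*} [Fintype ι₂] (c : ρ → ℝ) (G₁ : Matrix ρ ι ℝ)
    (G₂ : Matrix ρ ι₂ ℝ) :
    zonotope c (Matrix.fromCols G₁ G₂) = zonotope 0 G₁ + zonotope c G₂ := by
  ext x
  simp only [Set.mem_add, zonotope, Set.mem_ofPred_eq, zero_add]
  constructor
  · rintro ⟨β, hβ, rfl⟩
    refine ⟨_, ⟨β ∘ Sum.inl, fun i ↦ hβ (Sum.inl i), rfl⟩,
      _, ⟨β ∘ Sum.inr, fun i ↦ hβ (Sum.inr i), rfl⟩, ?_⟩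
    rw [add_left_comm, ← Matrix.fromCols_mulVec_sumElim, Sum.elim_comp_inl_inr]
  · rintro ⟨_, ⟨β₁, hβ₁, rfl⟩, _, ⟨β₂, hβ₂, rfl⟩, rfl⟩
    refine ⟨Sum.elim β₁ β₂, Sum.forall.2 ⟨hβ₁, hβ₂⟩, ?_⟩
    rw [Matrix.fromCols_mulVec_sumElim]
    abel

end Zonotope

/-- Zonotope collision check: two zonotopes `Z(c₁,G₁)` and `Z(c₂,G₂)` are
disjoint if and only if `c₁ ∉ Z(c₂, [G₁, G₂])`, where `[G₁, G₂]` is the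
horizontal concatenation of the generator matrices. -/
theorem zonotope_collision_check {n m₁ m₂ : ℕ}
    (c₁ c₂ : Fin n → ℝ)
    (G₁ : Matrix (Fin n) (Fin m₁) ℝ) (G₂ : Matrix (Fin n) (Fin m₂) ℝ) :
    zonotope c₁ G₁ ∩ zonotope c₂ G₂ = ∅ ↔
      c₁ ∉ zonotope c₂ (Matrix.fromCols G₁ G₂) := by
  rw [Set.eq_empty_iff_forall_notMem, zonotope_fromCols, ← not_exists, not_iff_not]
  simp only [Set.mem_inter_iff, Set.mem_add,
    mem_zonotope_iff_sub_mem_zonotope_zero (c := c₁)]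
  constructor
  · rintro ⟨x, hx₁, hx₂⟩
    exact ⟨c₁ - x, by rwa [← neg_sub, neg_mem_zonotope_zero], x, hx₂, sub_add_cancel c₁ x⟩
  · rintro ⟨a, ha, x, hx, rfl⟩
    exact ⟨x, by rwa [sub_add_cancel_right, neg_mem_zonotope_zero], hx⟩
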